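/- arXiv:2401.17483 — 4 statements merged into one kernel-verified Lean document; each statement's English description precedes it below -/
import Mathlib

section
/- Let A and B be groupoids with wide subgroupoids A₋ ⊆ A and B₊ ⊆ B, and let S be a groupoid equipped with a functor ∂ = (∂_A, ∂_B) : S → A × B. Assume: (i) [bipullback/uniformity] for every object s of S, every pair of objects (a, b) of A × B and every morphism ψ : ∂(s) → (a, b) in A × B, there exist a morphism u : s → s' in S and a morphism (ν_A, ν_B) : ∂(s') → (a, b) with ν_A in A₋ and ν_B in B₊ such that ψ = (ν_A, ν_B) ∘ ∂(u); (ii) [thinness] every morphism φ of S such that ∂_A(φ) lies in A₋ and ∂_B(φ) lies in B₊ is an identity. Then for every object s of S and morphisms θ_A : a → ∂_A(s) in A and θ_B : ∂_B(s) → b in B, there exist a UNIQUE object s' of S, a unique morphism φ : s → s' in S, a unique morphism ϑ_A⁻ : a → ∂_A(s') in A₋ and a unique morphism ϑ_B⁺ : ∂_B(s') → b in B₊ such that ϑ_A⁻ = ∂_A(φ) ∘ θ_A and θ_B = ϑ_B⁺ ∘ ∂_B(φ). -/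
open CategoryTheory

/-- **Reindexing of witnesses in thin spans (Lemma `act_sym`).**
Let `A`, `B` be groupoids with wide subgroupoids `Aneg ⊆ A` and `Bpos ⊆ B`, and let `S`
be a groupoid with a display functor `∂ : S ⥤ A × B`.  Assume the bipullback/uniformity
property (i) and thinness (ii).  Then for every `s : S` and symmetries
`θA : a ⟶ ∂A s` and `θB : ∂B s ⟶ b` there are a unique `s'`, a unique `φ : s ⟶ s'`, a
unique negative `ϑA⁻ : a ⟶ ∂A s'` and a unique positive `ϑB⁺ : ∂B s' ⟶ b` such that
`ϑA⁻ = ∂A φ ∘ θA` and `θB = ϑB⁺ ∘ ∂B φ`. -/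
theorem thin_span_reindexing
    {A B S : Type*} [Groupoid A] [Groupoid B] [Groupoid S]
    (Aneg : Subgroupoid A) (Bpos : Subgroupoid B)
    (hneg_wide : Aneg.IsWide) (hpos_wide : Bpos.IsWide)
    (disp : S ⥤ A × B)
    -- (i) uniformity / bipullback property
    (huni : ∀ (s : S) (a : A) (b : B) (ψ : disp.obj s ⟶ (a, b)),
      ∃ (s' : S) (u : s ⟶ s') (νA : (disp.obj s').1 ⟶ a) (νB : (disp.obj s').2 ⟶ b),
        νA ∈ Aneg.arrows _ _ ∧ νB ∈ Bpos.arrows _ _ ∧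
        ψ = disp.map u ≫ (νA, νB))
    -- (ii) thinness
    (hthin : ∀ {s s' : S} (φ : s ⟶ s'),
      (disp.map φ).1 ∈ Aneg.arrows _ _ → (disp.map φ).2 ∈ Bpos.arrows _ _ →
      ∃ h : s = s', φ = eqToHom h) :
    ∀ (s : S) (a : A) (b : B) (θA : a ⟶ (disp.obj s).1) (θB : (disp.obj s).2 ⟶ b),
      ∃! p : Σ s' : S, (s ⟶ s') × (a ⟶ (disp.obj s').1) × ((disp.obj s').2 ⟶ b),
        p.2.2.1 ∈ Aneg.arrows a (disp.obj p.1).1 ∧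
        p.2.2.2 ∈ Bpos.arrows (disp.obj p.1).2 b ∧
        p.2.2.1 = θA ≫ (disp.map p.2.1).1 ∧
        θB = (disp.map p.2.1).2 ≫ p.2.2.2 := by
  intro s a b θA θB
  obtain ⟨s', u, νA, νB, hA, hB, hψ⟩ := huni s a b (inv θA, θB)
  have hψ1 : inv θA = (disp.map u).1 ≫ νA := congrArg Prod.fst hψ
  have hψ2 : θB = (disp.map u).2 ≫ νB := congrArg Prod.snd hψ
  have hα : θA ≫ (disp.map u).1 = inv νA := by
    rw [← cancel_mono νA, Category.assoc, ← hψ1]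
    simp
  have hAinv : inv νA ∈ Aneg.arrows _ _ := by
    simpa only [Groupoid.inv_eq_inv] using Aneg.inv hA
  refine ⟨⟨s', u, inv νA, νB⟩, ⟨hAinv, hB, hα.symm, hψ2⟩, ?_⟩
  rintro ⟨s2, φ2, α2, β2⟩ ⟨hA2, hB2, hα2, hβ2⟩
  have hA2' : α2 ∈ Aneg.arrows a (disp.obj s2).1 := hA2
  have hB2' : β2 ∈ Bpos.arrows (disp.obj s2).2 b := hB2
  have hα2' : α2 = θA ≫ (disp.map φ2).1 := hα2
  have hβ2' : θB = (disp.map φ2).2 ≫ β2 := hβ2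
  set χ : s' ⟶ s2 := inv u ≫ φ2 with hχdef
  have hcomp : disp.map u ≫ disp.map χ = disp.map φ2 := by
    rw [hχdef, ← disp.map_comp, IsIso.hom_inv_id_assoc]
  have hcomp1 : (disp.map u).1 ≫ (disp.map χ).1 = (disp.map φ2).1 :=
    congrArg Prod.fst hcomp
  have hcomp2 : (disp.map u).2 ≫ (disp.map χ).2 = (disp.map φ2).2 :=
    congrArg Prod.snd hcomp
  have hχ1 : (disp.map χ).1 = νA ≫ α2 := by
    rw [← cancel_epi (disp.map u).1, hcomp1, ← Category.assoc, ← hψ1, hα2']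
    simp
  have hχ2 : (disp.map χ).2 = νB ≫ inv β2 := by
    rw [← cancel_epi (disp.map u).2, hcomp2, ← Category.assoc, ← hψ2, hβ2']
    simp
  have hBinv : inv β2 ∈ Bpos.arrows _ _ := by
    simpa only [Groupoid.inv_eq_inv] using Bpos.inv hB2'
  obtain ⟨h, hχ⟩ := hthin χ (hχ1 ▸ Aneg.mul hA hA2') (hχ2 ▸ Bpos.mul hB hBinv)
  subst h
  have hφ : φ2 = u := by
    rw [eqToHom_refl] at hχ
    have h2 : inv u ≫ φ2 = 𝟙 s' := hχ
    rw [IsIso.inv_comp_eq] at h2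
    simpa using h2
  subst hφ
  have hαeq : α2 = inv νA := by rw [hα2', hα]
  have hβeq : β2 = νB := by
    rw [← cancel_epi (disp.map φ2).2, ← hβ2', hψ2]
  subst hαeq; subst hβeq
  rfl
end

section
/- Let A and B be groupoids with wide subgroupoids A₋ ⊆ A and B₊ ⊆ B, and let S be a groupoid equipped with a functor ∂ = (∂_A, ∂_B) : S → A × B. Assume: (i) for every object s of S, every pair of objects (a, b) of A × B and every morphism ψ : ∂(s) → (a, b) in A × B, there exist a morphism u : s → s' in S and a morphism (ν_A, ν_B) : ∂(s') → (a, b) with ν_A in A₋ and ν_B in B₊ such that ψ = (ν_A, ν_B) ∘ ∂(u); (ii) every morphism φ of S such that ∂_A(φ) lies in A₋ and ∂_B(φ) lies in B₊ is an identity. Then for every object s of S, morphisms θ_A⁻ : a → ∂_A(s) in A₋ and θ_B⁺ : ∂_B(s) → b in B₊, and arbitrary morphisms Ω_A : a' → a in A and Ω_B : b → b' in B, there exist unique φ : s → s' in S, ϑ_A⁻ : a' → ∂_A(s') in A₋ and ϑ_B⁺ : ∂_B(s') → b' in B₊ such that ϑ_A⁻ = ∂_A(φ) ∘ θ_A⁻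 ∘ Ω_A and Ω_B ∘ θ_B⁺ = ϑ_B⁺ ∘ ∂_B(φ). -/
open CategoryTheory

open CategoryTheory in
private lemma prod_fst_inv {A B : Type*} [Groupoid A] [Groupoid B] {x y : A × B}
    (f : x ⟶ y) : (inv f).1 = inv f.1 := by
  have h := congrArg Prod.fst (IsIso.hom_inv_id f)
  exact IsIso.eq_inv_of_hom_inv_id h

open CategoryTheory in
private lemma prod_snd_inv {A B : Type*} [Groupoid A] [Groupoid B] {x y : A × B}
    (f : x ⟶ y) : (inv f).2 = inv f.2 := by
  have h := congrArg Prod.snd (IsIso.hom_inv_id f)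
  exact IsIso.eq_inv_of_hom_inv_id h


/-- **Fibration-like lifting of `∼`-witnesses in thin spans (Proposition `act_strat`).**
Let `A`, `B` be groupoids with wide subgroupoids `Aneg ⊆ A` and `Bpos ⊆ B`, and let `S`
be a groupoid with a display functor `∂ : S ⥤ A × B` satisfying uniformity (i) and
thinness (ii).  Then any `∼`-witness `(θA⁻ : a ⟶ ∂A s, s, θB⁺ : ∂B s ⟶ b)` (with `θA⁻`
negative and `θB⁺` positive) can be reindexed along arbitrary `ΩA : a' ⟶ a` and
`ΩB : b ⟶ b'`: there are unique `φ : s ⟶ s'`, negative `ϑA⁻ : a' ⟶ ∂A s'` and positive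
`ϑB⁺ : ∂B s' ⟶ b'` with `ϑA⁻ = ∂A φ ∘ θA⁻ ∘ ΩA` and `ΩB ∘ θB⁺ = ϑB⁺ ∘ ∂B φ`. -/
theorem thin_span_witness_lifting
    {A B S : Type*} [Groupoid A] [Groupoid B] [Groupoid S]
    (Aneg : Subgroupoid A) (Bpos : Subgroupoid B)
    (hneg_wide : Aneg.IsWide) (hpos_wide : Bpos.IsWide)
    (disp : S ⥤ A × B)
    -- (i) uniformity / bipullback property
    (huni : ∀ (s : S) (a : A) (b : B) (ψ : disp.obj s ⟶ (a, b)),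
      ∃ (s' : S) (u : s ⟶ s') (νA : (disp.obj s').1 ⟶ a) (νB : (disp.obj s').2 ⟶ b),
        νA ∈ Aneg.arrows _ _ ∧ νB ∈ Bpos.arrows _ _ ∧
        ψ = disp.map u ≫ (νA, νB))
    -- (ii) thinness
    (hthin : ∀ {s s' : S} (φ : s ⟶ s'),
      (disp.map φ).1 ∈ Aneg.arrows _ _ → (disp.map φ).2 ∈ Bpos.arrows _ _ →
      ∃ h : s = s', φ = eqToHom h) :
    ∀ (s : S) (a : A) (b : B) (θA : a ⟶ (disp.obj s).1) (θB : (disp.obj s).2 ⟶ b),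
      θA ∈ Aneg.arrows _ _ → θB ∈ Bpos.arrows _ _ →
      ∀ (a' : A) (b' : B) (ΩA : a' ⟶ a) (ΩB : b ⟶ b'),
      ∃! p : Σ s' : S, (s ⟶ s') × (a' ⟶ (disp.obj s').1) × ((disp.obj s').2 ⟶ b'),
        p.2.2.1 ∈ Aneg.arrows a' (disp.obj p.1).1 ∧
        p.2.2.2 ∈ Bpos.arrows (disp.obj p.1).2 b' ∧
        p.2.2.1 = ΩA ≫ θA ≫ (disp.map p.2.1).1 ∧
        θB ≫ ΩB = (disp.map p.2.1).2 ≫ p.2.2.2 := by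
  intro s a b θA θB hθA hθB a' b' ΩA ΩB
  obtain ⟨s', u, νA, νB, hνA, hνB, hψ⟩ :=
    huni s a' b' (Groupoid.inv (ΩA ≫ θA), θB ≫ ΩB)
  have hψ1 : Groupoid.inv (ΩA ≫ θA) = (disp.map u).1 ≫ νA := congrArg Prod.fst hψ
  have hψ2 : θB ≫ ΩB = (disp.map u).2 ≫ νB := congrArg Prod.snd hψ
  have key1 : ΩA ≫ θA ≫ (disp.map u).1 = Groupoid.inv νA := by
    rw [Groupoid.inv_eq_inv] at hψ1 ⊢
    rw [← IsIso.comp_inv_eq] at hψ1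
    rw [← hψ1]
    simp
  refine ⟨⟨s', u, Groupoid.inv νA, νB⟩, ⟨Aneg.inv hνA, hνB, key1.symm, hψ2⟩, ?_⟩
  rintro ⟨t, φ, αn, βp⟩ ⟨hα, hβ, hαeq, hβeq⟩
  dsimp only at hα hβ hαeq hβeq
  have comp1 : (disp.map (Groupoid.inv φ ≫ u)).1 = inv ((disp.map φ).1) ≫ (disp.map u).1 := by
    simp only [Groupoid.inv_eq_inv, Functor.map_comp, Functor.map_inv, prod_comp_fst,
      prod_fst_inv]
  have comp2 : (disp.map (Groupoid.inv φ ≫ u)).2 = inv ((disp.map φ).2) ≫ (disp.map u).2 := by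
    simp only [Groupoid.inv_eq_inv, Functor.map_comp, Functor.map_inv, prod_comp_snd,
      prod_snd_inv]
  have e1 : (disp.map (Groupoid.inv φ ≫ u)).1 = Groupoid.inv αn ≫ Groupoid.inv νA := by
    rw [comp1, Groupoid.inv_eq_inv, Groupoid.inv_eq_inv, hαeq]
    rw [Groupoid.inv_eq_inv] at key1
    rw [← key1]
    simp
  have e2 : (disp.map (Groupoid.inv φ ≫ u)).2 = βp ≫ Groupoid.inv νB := by
    have hφ2 : (disp.map φ).2 = (θB ≫ ΩB) ≫ inv βp := by rw [hβeq]; simp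
    have hu2 : (disp.map u).2 = (θB ≫ ΩB) ≫ inv νB := by rw [hψ2]; simp
    rw [comp2, hφ2, hu2, Groupoid.inv_eq_inv]
    simp
  have m1 : (disp.map (Groupoid.inv φ ≫ u)).1 ∈ Aneg.arrows _ _ := by
    rw [e1]; exact Aneg.mul (Aneg.inv hα) (Aneg.inv hνA)
  have m2 : (disp.map (Groupoid.inv φ ≫ u)).2 ∈ Bpos.arrows _ _ := by
    rw [e2]; exact Bpos.mul hβ (Bpos.inv hνB)
  obtain ⟨ht, hφ⟩ := hthin (Groupoid.inv φ ≫ u) m1 m2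
  subst ht
  simp only [eqToHom_refl] at hφ
  have hφu : φ = u := by
    have h := congrArg (fun z => φ ≫ z) hφ
    simpa [Groupoid.inv_eq_inv] using h.symm
  subst hφu
  have hα' : αn = Groupoid.inv νA := by rw [hαeq, key1]
  have hβ' : βp = νB := by
    have h := hβeq.symm.trans hψ2
    exact (cancel_epi ((disp.map φ).2)).mp h
  subst hα' hβ'
  rfl
end

section
/- Let A, B, C be groupoids, let S be a groupoid with a functor (∂_A^S, ∂_B^S) : S → A × B and T a groupoid with a functor (∂_B^T, ∂_C^T) : T → B × C. Assume the cospan (∂_B^S : S → B, ∂_B^T : T → B) satisfies the bipullback property. Let T ⊙ S be the strict pullback of ∂_B^S and ∂_B^T, whose objects are pairs (s, t) with ∂_B^S(s) = ∂_B^T(t). For a groupoid G, write ⌊x⌋ for the isomorphism class (connected component) of an object x. Then the relation ⟦T ⊙ S⟧ = { (⌊∂_A^S(s)⌋, ⌊∂_C^T(t)⌋) | (s, t) an object of T ⊙ S } ⊆ π₀(A) × π₀(C) equals the relational composition ⟦T⟧ ∘ ⟦S⟧ of ⟦S⟧ = { (⌊∂_A^S(s)⌋, ⌊∂_B^S(s)⌋)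 | s ∈ S } and ⟦T⟧ = { (⌊∂_B^T(t)⌋, ⌊∂_C^T(t)⌋) | t ∈ T }. -/
open CategoryTheory

/-- The setoid of isomorphism (connectedness) on the objects of a groupoid. -/
def isoSetoid (G : Type*) [Groupoid G] : Setoid G where
  r x y := Nonempty (x ⟶ y)
  iseqv := ⟨fun x => ⟨𝟙 x⟩, fun ⟨f⟩ => ⟨Groupoid.inv f⟩, fun ⟨f⟩ ⟨g⟩ => ⟨f ≫ g⟩⟩

/-- `π₀ G`: the set of isomorphism classes (connected components) of a groupoid. -/
def pizero (G : Type*) [Groupoid G] : Type _ := Quotient (isoSetoid G)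

/-- The isomorphism class of an object. -/
def piclass {G : Type*} [Groupoid G] (x : G) : pizero G := Quotient.mk (isoSetoid G) x

/-- **Functoriality of the relational collapse.**
Given spans of groupoids `A ← S → B` and `B ← T → C` such that the cospan
`(∂ᴮS : S ⥤ B, ∂ᴮT : T ⥤ B)` satisfies the bipullback property, the relational collapse
of the composite span `T ⊙ S` (the strict pullback, whose objects are pairs `(s, t)`
with equal displays in `B`) is the relational composition of the collapses of `S` and
of `T`, as relations between sets of connected components. -/
theorem relational_collapse_functorial
    {A B C S T : Type*} [Groupoid A] [Groupoid B] [Groupoid C]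
    [Groupoid S] [Groupoid T]
    (dAS : S ⥤ A) (dBS : S ⥤ B) (dBT : T ⥤ B) (dCT : T ⥤ C)
    -- the cospan (∂ᴮS, ∂ᴮT) satisfies the bipullback property
    (hbip : ∀ (s : S) (t : T) (v : dBS.obj s ⟶ dBT.obj t),
      ∃ (s' : S) (t' : T) (u : s ⟶ s') (w : t' ⟶ t) (h : dBS.obj s' = dBT.obj t'),
        v = dBS.map u ≫ eqToHom h ≫ dBT.map w) :
    {p : pizero A × pizero C |
        ∃ (s : S) (t : T), dBS.obj s = dBT.obj t ∧
          p = (piclass (dAS.obj s), piclass (dCT.obj t))} =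
    {p : pizero A × pizero C |
        ∃ q : pizero B,
          (∃ s : S, (p.1, q) = (piclass (dAS.obj s), piclass (dBS.obj s))) ∧
          (∃ t : T, (q, p.2) = (piclass (dBT.obj t), piclass (dCT.obj t)))} := by
  ext p
  constructor
  · rintro ⟨s, t, h, rfl⟩
    exact ⟨piclass (dBS.obj s), ⟨s, rfl⟩, ⟨t, by rw [h]⟩⟩
  · rintro ⟨q, ⟨s, hs⟩, ⟨t, ht⟩⟩
    obtain ⟨hs1, hs2⟩ := Prod.mk.injEq .. ▸ hs
    obtain ⟨ht1, ht2⟩ := Prod.mk.injEq .. ▸ ht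
    have : (isoSetoid B).r (dBS.obj s) (dBT.obj t) := by
      apply Quotient.exact
      exact (hs2 ▸ ht1 : (piclass (dBS.obj s) : pizero B) = piclass (dBT.obj t))
    obtain ⟨v⟩ := this
    obtain ⟨s', t', u, w, h, -⟩ := hbip s t v
    refine ⟨s', t', h, ?_⟩
    have hA : piclass (dAS.obj s) = piclass (dAS.obj s') :=
      Quotient.sound ⟨dAS.map u⟩
    have hC : piclass (dCT.obj t') = piclass (dCT.obj t) :=
      Quotient.sound ⟨dCT.map w⟩
    rw [Prod.ext_iff]
    exact ⟨hs1.trans hA, ht2.trans hC.symm⟩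
end

section
/- Let A, B, C be groupoids with wide subgroupoids A₋ ⊆ A, B₋ ⊆ B, B₊ ⊆ B, C₊ ⊆ C; let S be a groupoid with a functor (∂_A, ∂_B) : S → A × B and T a groupoid with a functor (∂_B, ∂_C) : T → B × C; and fix objects â of A, b̂ of B, ĉ of C. Assume: (i) [unique synchronization] for all objects s of S, t of T and every morphism θ : ∂_B(s) → ∂_B(t) in B, there are unique s', t' and unique φ : s → s' in S and ψ : t' → t in T with ∂_A(φ) in A₋, ∂_C(ψ) in C₊, ∂_B(s') = ∂_B(t') and θ = ∂_B(ψ) ∘ ∂_B(φ); (ii) S has the lifting property with respect to (A₋, B₊): for all (θ_A⁻ : a → ∂_A(s) in A₋, θ_B⁺ : ∂_B(s) → b in B₊) and all Ω_A : a' → a, Ω_B : b → b' in A, B, there are unique φ : s → s' in S, ϑ_A⁻ in A₋ and ϑ_B⁺ in B₊ with ϑ_A⁻ = ∂_A(φ) ∘ θ_A⁻ ∘ Ω_A and Ω_B ∘ θ_B⁺ = ϑ_B⁺ ∘ ∂_B(φ); and (iii) T has the analogous lifting property with respect to (B₋, C₊). Define: W_S = { (θ_A⁻, s, θ_B⁺)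 | θ_A⁻ : â → ∂_A(s) in A₋, θ_B⁺ : ∂_B(s) → b̂ in B₊ }, W_T = { (θ_B⁻, t, θ_C⁺) | θ_B⁻ : b̂ → ∂_B(t) in B₋, θ_C⁺ : ∂_C(t) → ĉ in C₊ }, and W_{S,T} = { (θ_A⁻, s, Θ, t, θ_C⁺) | θ_A⁻ : â → ∂_A(s) in A₋, ∂_B(s) = ∂_B(t), Θ : b̂ → ∂_B(s) in B, θ_C⁺ : ∂_C(t) → ĉ in C₊ }. Then there is a bijection Υ : W_S × W_T ≅ W_{S,T} such that whenever Υ((θ_A⁻, s, θ_B⁺), (Ω_B⁻, t, Ω_C⁺)) = (ψ_A⁻, s', Θ, t', ψ_C⁺), there are unique ω : s → s' in S and ν : t → t' in T with: ψ_A⁻ = ∂_A(ω) ∘ θ_A⁻, Θ = ∂_B(ω) ∘ (θ_B⁺)⁻¹ = ∂_B(ν) ∘ Ω_B⁻, and Ω_C⁺ = ψ_C⁺ ∘ ∂_C(ν). -/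
open CategoryTheory

/-- A `∼`-witness of a span `(dL, dR) : S ⥤ A × B` at representatives `ahat`, `bhat`:
an object `s` together with a negative symmetry `ahat ⟶ dL s` and a positive symmetry
`dR s ⟶ bhat`. -/
structure SimWit {A B S : Type*} [Groupoid A] [Groupoid B] [Groupoid S]
    (Aneg : Subgroupoid A) (Bpos : Subgroupoid B)
    (dL : S ⥤ A) (dR : S ⥤ B) (ahat : A) (bhat : B) : Type _ where
  s : S
  θL : ahat ⟶ dL.obj s
  θR : dR.obj s ⟶ bhat
  hL : θL ∈ Aneg.arrows ahat (dL.obj s)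
  hR : θR ∈ Bpos.arrows (dR.obj s) bhat

/-- A `∼`-interaction witness of composable spans `S` (over `A × B`) and `T` (over
`B × C`) at representatives `ahat`, `bhat`, `chat`. -/
structure SimIWit {A B C S T : Type*}
    [Groupoid A] [Groupoid B] [Groupoid C] [Groupoid S] [Groupoid T]
    (Aneg : Subgroupoid A) (Cpos : Subgroupoid C)
    (dA : S ⥤ A) (dBS : S ⥤ B) (dBT : T ⥤ B) (dC : T ⥤ C)
    (ahat : A) (bhat : B) (chat : C) : Type _ where
  s : S
  t : T
  θA : ahat ⟶ dA.obj s
  hA : θA ∈ Aneg.arrows ahat (dA.obj s)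
  eqB : dBS.obj s = dBT.obj t
  Θ : bhat ⟶ dBS.obj s
  θC : dC.obj t ⟶ chat
  hC : θC ∈ Cpos.arrows (dC.obj t) chat

/-! A pair of witnesses and an interaction witness are related when mediating symmetries
`ω`, `ν` exist as in the statement. Unique synchronization of `θ_B⁺ ≫ Ω_B⁻` shows that each
pair of witnesses is related to exactly one interaction witness, through exactly one pair
`(ω, ν)`; the lifting properties, started from the identities of `B₊` and `B₋`, transport `Θ`
back to `b̂` and show that each interaction witness is related to exactly one pair of
witnesses. A relation that is functional in both directions is the graph of a bijection. -/

theorem Function.exists_equiv_of_forall_existsUnique {α β : Sort*} {r : α → β → Prop}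
    (h₁ : ∀ a, ∃! b, r a b) (h₂ : ∀ b, ∃! a, r a b) : ∃ e : α ≃ β, ∀ a, r a (e a) := by
  obtain ⟨f, hf⟩ := forall_existsUnique_iff.mp h₁
  have hbij : Function.Bijective f :=
    (Function.bijective_iff_existsUnique f).mpr fun b => by simpa only [hf] using h₂ b
  exact ⟨Equiv.ofBijective f hbij, fun a => hf.mpr rfl⟩

section Witnesses

variable {X Y S : Type*} [Groupoid X] [Groupoid Y] [Groupoid S]
  {N : Subgroupoid X} {P : Subgroupoid Y} {dL : S ⥤ X} {dR : S ⥤ Y} {xhat : X} {yhat : Y}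

variable (N P dL dR) in
def HasWitnessLifting : Prop :=
  ∀ (s : S) (a : X) (b : Y) (θA : a ⟶ dL.obj s) (θB : dR.obj s ⟶ b),
    θA ∈ N.arrows _ _ → θB ∈ P.arrows _ _ →
    ∀ (a' : X) (b' : Y) (ΩA : a' ⟶ a) (ΩB : b ⟶ b'),
      ∃! p : Σ s' : S, (s ⟶ s') × (a' ⟶ dL.obj s') × (dR.obj s' ⟶ b'),
        p.2.2.1 ∈ N.arrows a' (dL.obj p.1) ∧ p.2.2.2 ∈ P.arrows (dR.obj p.1) b' ∧
        p.2.2.1 = ΩA ≫ θA ≫ dL.map p.2.1 ∧ θB ≫ ΩB = dR.map p.2.1 ≫ p.2.2.2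

namespace SimWit

def Over (w : SimWit N P dL dR xhat yhat) {s : S} (ω : w.s ⟶ s) (α : xhat ⟶ dL.obj s)
    (β : dR.obj s ⟶ yhat) : Prop :=
  α = w.θL ≫ dL.map ω ∧ w.θR = dR.map ω ≫ β

theorem eq_of_sigma_eq {w w' : SimWit N P dL dR xhat yhat} {s : S} {f : s ⟶ w.s}
    {f' : s ⟶ w'.s}
    (h : (⟨w.s, f, w.θL, w.θR⟩ : Σ s' : S, (s ⟶ s') × (xhat ⟶ dL.obj s') × (dR.obj s' ⟶ yhat)) =
      ⟨w'.s, f', w'.θL, w'.θR⟩) :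
    w = w' := by
  obtain ⟨s₁, θL, θR, hL, hR⟩ := w
  obtain ⟨s₂, θL', θR', hL', hR'⟩ := w'
  obtain ⟨rfl, h⟩ := Sigma.mk.inj_iff.mp h
  simp only [heq_eq_eq, Prod.mk.injEq] at h
  obtain ⟨-, rfl, rfl⟩ := h
  rfl

/-- The lifting property only needs some negative arrow `n` into `dL s` and some positive
arrow `q` out of `dR s` to start from. -/
theorem existsUnique_over (hlift : HasWitnessLifting N P dL dR) {s : S} {x : X} {y : Y}
    {n : x ⟶ dL.obj s} {q : dR.obj s ⟶ y} (hn : n ∈ N.arrows _ _) (hq : q ∈ P.arrows _ _)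
    (α : xhat ⟶ dL.obj s) (β : dR.obj s ⟶ yhat) :
    ∃! w : SimWit N P dL dR xhat yhat, ∃ ω : w.s ⟶ s, w.Over ω α β := by
  obtain ⟨p, ⟨hpN, hpP, hpL, hpR⟩, huniq⟩ :=
    hlift s x y n q hn hq xhat yhat (α ≫ Groupoid.inv n) (Groupoid.inv q ≫ β)
  refine ⟨⟨p.1, p.2.2.1, p.2.2.2, hpN, hpP⟩, ⟨Groupoid.inv p.2.1, ?_, ?_⟩, ?_⟩
  · simp [hpL]
  · simpa using hpR.symm
  · rintro w ⟨ω, hα, hβ⟩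
    refine eq_of_sigma_eq (f := Groupoid.inv ω) (f' := p.2.1) (huniq _ ⟨w.hL, w.hR, ?_, ?_⟩)
    · simp [hα]
    · simp [hβ]

end SimWit

end Witnesses

section Interaction

variable {A B C S T : Type*} [Groupoid A] [Groupoid B] [Groupoid C] [Groupoid S] [Groupoid T]
  {Aneg : Subgroupoid A} {Bneg Bpos : Subgroupoid B} {Cpos : Subgroupoid C}
  {dA : S ⥤ A} {dBS : S ⥤ B} {dBT : T ⥤ B} {dC : T ⥤ C} {ahat : A} {bhat : B} {chat : C}

variable (Aneg Cpos dA dBS dBT dC) in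
def IsSync {s : S} {t : T} (θ : dBS.obj s ⟶ dBT.obj t)
    (p : Σ (s' : S) (t' : T), (s ⟶ s') × (t' ⟶ t)) : Prop :=
  dA.map p.2.2.1 ∈ Aneg.arrows _ _ ∧ dC.map p.2.2.2 ∈ Cpos.arrows _ _ ∧
    ∃ h : dBS.obj p.1 = dBT.obj p.2.1, θ = dBS.map p.2.2.1 ≫ eqToHom h ≫ dBT.map p.2.2.2

variable (Aneg Cpos dA dBS dBT dC) in
def HasUniqueSync : Prop :=
  ∀ (s : S) (t : T) (θ : dBS.obj s ⟶ dBT.obj t), ∃! p, IsSync Aneg Cpos dA dBS dBT dC θ p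

def Mediates (w₁ : SimWit Aneg Bpos dA dBS ahat bhat) (w₂ : SimWit Bneg Cpos dBT dC bhat chat)
    (V : SimIWit Aneg Cpos dA dBS dBT dC ahat bhat chat)
    (p : (w₁.s ⟶ V.s) × (w₂.s ⟶ V.t)) : Prop :=
  V.θA = w₁.θL ≫ dA.map p.1 ∧ V.Θ = Groupoid.inv w₁.θR ≫ dBS.map p.1 ∧
    V.Θ ≫ eqToHom V.eqB = w₂.θL ≫ dBT.map p.2 ∧ w₂.θR = dC.map p.2 ≫ V.θC

variable {w₁ : SimWit Aneg Bpos dA dBS ahat bhat} {w₂ : SimWit Bneg Cpos dBT dC bhat chat}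
  {V : SimIWit Aneg Cpos dA dBS dBT dC ahat bhat chat}

theorem mediates_iff_over {p : (w₁.s ⟶ V.s) × (w₂.s ⟶ V.t)} :
    Mediates w₁ w₂ V p ↔
      w₁.Over p.1 V.θA (Groupoid.inv V.Θ) ∧ w₂.Over p.2 (V.Θ ≫ eqToHom V.eqB) V.θC := by
  have : V.Θ = Groupoid.inv w₁.θR ≫ dBS.map p.1 ↔ w₁.θR = dBS.map p.1 ≫ Groupoid.inv V.Θ := by
    simp only [Groupoid.inv_eq_inv, IsIso.eq_inv_comp, IsIso.eq_comp_inv]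
  simp only [Mediates, SimWit.Over, this, and_assoc]

theorem isSync_of_mediates {p : (w₁.s ⟶ V.s) × (w₂.s ⟶ V.t)} (h : Mediates w₁ w₂ V p) :
    IsSync Aneg Cpos dA dBS dBT dC (w₁.θR ≫ w₂.θL) ⟨V.s, V.t, p.1, Groupoid.inv p.2⟩ := by
  obtain ⟨hA, hB, hB', hC⟩ := h
  refine ⟨?_, ?_, V.eqB, ?_⟩
  · have : dA.map p.1 = Groupoid.inv w₁.θL ≫ V.θA := by simp [hA]
    exact this ▸ Aneg.mul (Aneg.inv w₁.hL) V.hA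
  · have : dC.map (Groupoid.inv p.2) = V.θC ≫ Groupoid.inv w₂.θR := by simp [hC]
    exact this ▸ Cpos.mul V.hC (Cpos.inv w₂.hR)
  · have : dBS.map p.1 = w₁.θR ≫ V.Θ := by simp [hB]
    simp [this, reassoc_of% hB']

theorem exists_mediates (hsync : HasUniqueSync Aneg Cpos dA dBS dBT dC)
    (w₁ : SimWit Aneg Bpos dA dBS ahat bhat) (w₂ : SimWit Bneg Cpos dBT dC bhat chat) :
    ∃ (V : SimIWit Aneg Cpos dA dBS dBT dC ahat bhat chat) (p : (w₁.s ⟶ V.s) × (w₂.s ⟶ V.t)),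
      Mediates w₁ w₂ V p := by
  obtain ⟨⟨s, t, φ, ψ⟩, ⟨hφ, hψ, hst, hθ⟩, -⟩ := hsync w₁.s w₂.s (w₁.θR ≫ w₂.θL)
  refine ⟨⟨s, t, w₁.θL ≫ dA.map φ, Aneg.mul w₁.hL hφ, hst, Groupoid.inv w₁.θR ≫ dBS.map φ,
    dC.map ψ ≫ w₂.θR, Cpos.mul hψ w₂.hR⟩, (φ, Groupoid.inv ψ), rfl, rfl, ?_, ?_⟩
  · simpa using hθ.symm
  · simp

theorem eq_of_mediates_of_sync_eq {V' : SimIWit Aneg Cpos dA dBS dBT dC ahat bhat chat}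
    {p : (w₁.s ⟶ V.s) × (w₂.s ⟶ V.t)} {p' : (w₁.s ⟶ V'.s) × (w₂.s ⟶ V'.t)}
    (h : Mediates w₁ w₂ V p) (h' : Mediates w₁ w₂ V' p')
    (hpair : (⟨V.s, V.t, p.1, Groupoid.inv p.2⟩ : Σ (s' : S) (t' : T), (w₁.s ⟶ s') × (t' ⟶ w₂.s))
      = ⟨V'.s, V'.t, p'.1, Groupoid.inv p'.2⟩) :
    (⟨V, p⟩ : Σ V : SimIWit Aneg Cpos dA dBS dBT dC ahat bhat chat,
      (w₁.s ⟶ V.s) × (w₂.s ⟶ V.t)) = ⟨V', p'⟩ := by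
  obtain ⟨s, t, θA, hA, eqB, Θ, θC, hC⟩ := V
  obtain ⟨s', t', θA', hA', eqB', Θ', θC', hC'⟩ := V'
  obtain ⟨ω, ν⟩ := p
  obtain ⟨ω', ν'⟩ := p'
  obtain ⟨rfl, hpair⟩ := Sigma.mk.inj_iff.mp hpair
  obtain ⟨rfl, hpair⟩ := Sigma.mk.inj_iff.mp (eq_of_heq hpair)
  simp only [heq_eq_eq, Prod.mk.injEq] at hpair
  obtain ⟨rfl, hν⟩ := hpair
  obtain rfl : ν = ν' := by simpa using congrArg Groupoid.inv hν
  obtain ⟨hθA, hΘ, -, hθC⟩ := h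
  obtain ⟨hθA', hΘ', -, hθC'⟩ := h'
  obtain rfl : θA = θA' := hθA.trans hθA'.symm
  obtain rfl : Θ = Θ' := hΘ.trans hΘ'.symm
  obtain rfl : θC = θC' := (cancel_epi (dC.map ν)).mp (hθC.symm.trans hθC')
  rfl

theorem mediates_sigma_eq (hsync : HasUniqueSync Aneg Cpos dA dBS dBT dC)
    {V' : SimIWit Aneg Cpos dA dBS dBT dC ahat bhat chat}
    {p : (w₁.s ⟶ V.s) × (w₂.s ⟶ V.t)} {p' : (w₁.s ⟶ V'.s) × (w₂.s ⟶ V'.t)}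
    (h : Mediates w₁ w₂ V p) (h' : Mediates w₁ w₂ V' p') :
    (⟨V, p⟩ : Σ V : SimIWit Aneg Cpos dA dBS dBT dC ahat bhat chat,
      (w₁.s ⟶ V.s) × (w₂.s ⟶ V.t)) = ⟨V', p'⟩ :=
  eq_of_mediates_of_sync_eq h h'
    ((hsync _ _ _).unique (isSync_of_mediates h) (isSync_of_mediates h'))

theorem existsUnique_mediated (hsync : HasUniqueSync Aneg Cpos dA dBS dBT dC)
    (w₁ : SimWit Aneg Bpos dA dBS ahat bhat) (w₂ : SimWit Bneg Cpos dBT dC bhat chat) :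
    ∃! V : SimIWit Aneg Cpos dA dBS dBT dC ahat bhat chat, ∃ p, Mediates w₁ w₂ V p := by
  obtain ⟨V, p, h⟩ := exists_mediates hsync w₁ w₂
  exact ⟨V, ⟨p, h⟩, fun V' ⟨p', h'⟩ => congrArg Sigma.fst (mediates_sigma_eq hsync h' h)⟩

theorem Mediates.unique (hsync : HasUniqueSync Aneg Cpos dA dBS dBT dC)
    {p p' : (w₁.s ⟶ V.s) × (w₂.s ⟶ V.t)} (h : Mediates w₁ w₂ V p)
    (h' : Mediates w₁ w₂ V p') : p = p' :=
  eq_of_heq (Sigma.mk.inj_iff.mp (mediates_sigma_eq hsync h h')).2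

theorem existsUnique_mediating_witnesses (hBnw : Bneg.IsWide) (hBpw : Bpos.IsWide)
    (hliftS : HasWitnessLifting Aneg Bpos dA dBS) (hliftT : HasWitnessLifting Bneg Cpos dBT dC)
    (V : SimIWit Aneg Cpos dA dBS dBT dC ahat bhat chat) :
    ∃! w : SimWit Aneg Bpos dA dBS ahat bhat × SimWit Bneg Cpos dBT dC bhat chat,
      ∃ p, Mediates w.1 w.2 V p := by
  obtain ⟨w₁, ⟨ω, h₁⟩, hu₁⟩ :=
    SimWit.existsUnique_over hliftS V.hA (hBpw.id_mem _) V.θA (Groupoid.inv V.Θ)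
  obtain ⟨w₂, ⟨ν, h₂⟩, hu₂⟩ :=
    SimWit.existsUnique_over hliftT (hBnw.id_mem _) V.hC (V.Θ ≫ eqToHom V.eqB) V.θC
  refine ⟨(w₁, w₂), ⟨(ω, ν), mediates_iff_over.mpr ⟨h₁, h₂⟩⟩, ?_⟩
  rintro ⟨w₁', w₂'⟩ ⟨p, hp⟩
  obtain ⟨h₁', h₂'⟩ := mediates_iff_over.mp hp
  exact Prod.ext (hu₁ _ ⟨_, h₁'⟩) (hu₂ _ ⟨_, h₂'⟩)

end Interaction

theorem interaction_witness_bijection_general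
    {A B C S T : Type*}
    [Groupoid A] [Groupoid B] [Groupoid C] [Groupoid S] [Groupoid T]
    (Aneg : Subgroupoid A) (Bneg Bpos : Subgroupoid B) (Cpos : Subgroupoid C)
    (hBnw : Bneg.IsWide) (hBpw : Bpos.IsWide)
    (dA : S ⥤ A) (dBS : S ⥤ B) (dBT : T ⥤ B) (dC : T ⥤ C)
    (ahat : A) (bhat : B) (chat : C)
    -- (i) unique synchronization
    (hsync : ∀ (s : S) (t : T) (θ : dBS.obj s ⟶ dBT.obj t),
      ∃! p : Σ (s' : S) (t' : T), (s ⟶ s') × (t' ⟶ t),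
        dA.map p.2.2.1 ∈ Aneg.arrows _ _ ∧ dC.map p.2.2.2 ∈ Cpos.arrows _ _ ∧
        ∃ h : dBS.obj p.1 = dBT.obj p.2.1,
          θ = dBS.map p.2.2.1 ≫ eqToHom h ≫ dBT.map p.2.2.2)
    -- (ii) lifting property of S with respect to (A₋, B₊)
    (hliftS : ∀ (s : S) (a : A) (b : B) (θA : a ⟶ dA.obj s) (θB : dBS.obj s ⟶ b),
      θA ∈ Aneg.arrows _ _ → θB ∈ Bpos.arrows _ _ →
      ∀ (a' : A) (b' : B) (ΩA : a' ⟶ a) (ΩB : b ⟶ b'),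
        ∃! p : Σ s' : S, (s ⟶ s') × (a' ⟶ dA.obj s') × (dBS.obj s' ⟶ b'),
          p.2.2.1 ∈ Aneg.arrows a' (dA.obj p.1) ∧ p.2.2.2 ∈ Bpos.arrows (dBS.obj p.1) b' ∧
          p.2.2.1 = ΩA ≫ θA ≫ dA.map p.2.1 ∧ θB ≫ ΩB = dBS.map p.2.1 ≫ p.2.2.2)
    -- (iii) lifting property of T with respect to (B₋, C₊)
    (hliftT : ∀ (t : T) (b : B) (c : C) (θB : b ⟶ dBT.obj t) (θC : dC.obj t ⟶ c),
      θB ∈ Bneg.arrows _ _ → θC ∈ Cpos.arrows _ _ →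
      ∀ (b' : B) (c' : C) (ΩB : b' ⟶ b) (ΩC : c ⟶ c'),
        ∃! p : Σ t' : T, (t ⟶ t') × (b' ⟶ dBT.obj t') × (dC.obj t' ⟶ c'),
          p.2.2.1 ∈ Bneg.arrows b' (dBT.obj p.1) ∧ p.2.2.2 ∈ Cpos.arrows (dC.obj p.1) c' ∧
          p.2.2.1 = ΩB ≫ θB ≫ dBT.map p.2.1 ∧ θC ≫ ΩC = dC.map p.2.1 ≫ p.2.2.2) :
    ∃ Υ : (SimWit Aneg Bpos dA dBS ahat bhat × SimWit Bneg Cpos dBT dC bhat chat) ≃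
        SimIWit Aneg Cpos dA dBS dBT dC ahat bhat chat,
      ∀ (w₁ : SimWit Aneg Bpos dA dBS ahat bhat)
        (w₂ : SimWit Bneg Cpos dBT dC bhat chat),
        ∃! p : (w₁.s ⟶ (Υ (w₁, w₂)).s) × (w₂.s ⟶ (Υ (w₁, w₂)).t),
          (Υ (w₁, w₂)).θA = w₁.θL ≫ dA.map p.1 ∧
          (Υ (w₁, w₂)).Θ = Groupoid.inv w₁.θR ≫ dBS.map p.1 ∧
          (Υ (w₁, w₂)).Θ ≫ eqToHom (Υ (w₁, w₂)).eqB = w₂.θL ≫ dBT.map p.2 ∧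
          w₂.θR = dC.map p.2 ≫ (Υ (w₁, w₂)).θC := by
  obtain ⟨Υ, hΥ⟩ := Function.exists_equiv_of_forall_existsUnique
    (fun w : SimWit Aneg Bpos dA dBS ahat bhat × SimWit Bneg Cpos dBT dC bhat chat =>
      existsUnique_mediated hsync w.1 w.2)
    (existsUnique_mediating_witnesses hBnw hBpw hliftS hliftT)
  refine ⟨Υ, fun w₁ w₂ => ?_⟩
  obtain ⟨p, hp⟩ := hΥ (w₁, w₂)
  exact ⟨p, hp, fun p' hp' => Mediates.unique hsync hp' hp⟩

/-- **The bijection between pairs of `∼`-witnesses and `∼`-interaction witnesses**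
(composition of witnesses in the quantitative collapse of thin spans).  Under the
unique synchronization property (i) and the `∼`-witness lifting properties (ii), (iii),
there is a bijection `Υ : W_S × W_T ≃ W_{S,T}` compatible, via unique mediating
symmetries `ω : s ⟶ s'` and `ν : t ⟶ t'`, with all the structure. -/
theorem interaction_witness_bijection
    {A B C S T : Type*}
    [Groupoid A] [Groupoid B] [Groupoid C] [Groupoid S] [Groupoid T]
    (Aneg : Subgroupoid A) (Bneg Bpos : Subgroupoid B) (Cpos : Subgroupoid C)
    (hAw : Aneg.IsWide) (hBnw : Bneg.IsWide) (hBpw : Bpos.IsWide) (hCw : Cpos.IsWide)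
    (dA : S ⥤ A) (dBS : S ⥤ B) (dBT : T ⥤ B) (dC : T ⥤ C)
    (ahat : A) (bhat : B) (chat : C)
    -- (i) unique synchronization
    (hsync : ∀ (s : S) (t : T) (θ : dBS.obj s ⟶ dBT.obj t),
      ∃! p : Σ (s' : S) (t' : T), (s ⟶ s') × (t' ⟶ t),
        dA.map p.2.2.1 ∈ Aneg.arrows _ _ ∧ dC.map p.2.2.2 ∈ Cpos.arrows _ _ ∧
        ∃ h : dBS.obj p.1 = dBT.obj p.2.1,
          θ = dBS.map p.2.2.1 ≫ eqToHom h ≫ dBT.map p.2.2.2)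
    -- (ii) lifting property of S with respect to (A₋, B₊)
    (hliftS : ∀ (s : S) (a : A) (b : B) (θA : a ⟶ dA.obj s) (θB : dBS.obj s ⟶ b),
      θA ∈ Aneg.arrows _ _ → θB ∈ Bpos.arrows _ _ →
      ∀ (a' : A) (b' : B) (ΩA : a' ⟶ a) (ΩB : b ⟶ b'),
        ∃! p : Σ s' : S, (s ⟶ s') × (a' ⟶ dA.obj s') × (dBS.obj s' ⟶ b'),
          p.2.2.1 ∈ Aneg.arrows a' (dA.obj p.1) ∧ p.2.2.2 ∈ Bpos.arrows (dBS.obj p.1) b' ∧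
          p.2.2.1 = ΩA ≫ θA ≫ dA.map p.2.1 ∧ θB ≫ ΩB = dBS.map p.2.1 ≫ p.2.2.2)
    -- (iii) lifting property of T with respect to (B₋, C₊)
    (hliftT : ∀ (t : T) (b : B) (c : C) (θB : b ⟶ dBT.obj t) (θC : dC.obj t ⟶ c),
      θB ∈ Bneg.arrows _ _ → θC ∈ Cpos.arrows _ _ →
      ∀ (b' : B) (c' : C) (ΩB : b' ⟶ b) (ΩC : c ⟶ c'),
        ∃! p : Σ t' : T, (t ⟶ t') × (b' ⟶ dBT.obj t') × (dC.obj t' ⟶ c'),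
          p.2.2.1 ∈ Bneg.arrows b' (dBT.obj p.1) ∧ p.2.2.2 ∈ Cpos.arrows (dC.obj p.1) c' ∧
          p.2.2.1 = ΩB ≫ θB ≫ dBT.map p.2.1 ∧ θC ≫ ΩC = dC.map p.2.1 ≫ p.2.2.2) :
    ∃ Υ : (SimWit Aneg Bpos dA dBS ahat bhat × SimWit Bneg Cpos dBT dC bhat chat) ≃
        SimIWit Aneg Cpos dA dBS dBT dC ahat bhat chat,
      ∀ (w₁ : SimWit Aneg Bpos dA dBS ahat bhat)
        (w₂ : SimWit Bneg Cpos dBT dC bhat chat),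
        ∃! p : (w₁.s ⟶ (Υ (w₁, w₂)).s) × (w₂.s ⟶ (Υ (w₁, w₂)).t),
          (Υ (w₁, w₂)).θA = w₁.θL ≫ dA.map p.1 ∧
          (Υ (w₁, w₂)).Θ = Groupoid.inv w₁.θR ≫ dBS.map p.1 ∧
          (Υ (w₁, w₂)).Θ ≫ eqToHom (Υ (w₁, w₂)).eqB = w₂.θL ≫ dBT.map p.2 ∧
          w₂.θR = dC.map p.2 ≫ (Υ (w₁, w₂)).θC :=
  interaction_witness_bijection_general Aneg Bneg Bpos Cpos hBnw hBpw dA dBS dBT dC ahat bhat chat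
    hsync hliftS hliftT
end
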